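/- Under Assumption A1, if b* ∈ ℝ^I satisfies f_iᵀ·b* = β_i for every i, then the noiseless iteration y(k+1) = Q·y(k) + α·F·β converges, from any initial state y(0) ∈ ℝ^{I²}, to the stacked Nash equilibrium: lim_{k→∞} y(k) = 1_I ⊗ b*. -/

import Mathlib

open Matrix MeasureTheory ProbabilityTheory Filter Finset
open scoped Kronecker ENNReal Topology

noncomputable section

/-- Coefficient `β_i = a c_i d_i I / (a c_i (I-1) + 1)`. -/
def betaCoef (I : ℕ) (a : ℝ) (c d : Fin I → ℝ) (i : Fin I) : ℝ :=
  a * c i * d i * (I : ℝ) / (a * c i * ((I : ℝ) - 1) + 1)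

/-- Coefficient `μ_{ij}` (with `μ_{ii} = 0`). -/
def muCoef (I : ℕ) (a : ℝ) (c : Fin I → ℝ) (i j : Fin I) : ℝ :=
  if j = i then 0
  else (2 * a * c i * ((I : ℝ) - 1) - ((I : ℝ) - 2)) /
    (2 * ((I : ℝ) - 1) * (a * c i * ((I : ℝ) - 1) + 1))

/-- Vector `f_i = e_i - (μ_{i1}, …, μ_{iI})ᵀ`. -/
def fvec (I : ℕ) (a : ℝ) (c : Fin I → ℝ) (i : Fin I) : Fin I → ℝ :=
  fun j => (if j = i then (1 : ℝ) else 0) - muCoef I a c i j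

/-- Block-diagonal `I² × I` matrix whose `i`-th diagonal block is the column vector `f i`. -/
def blockF (I : ℕ) (f : Fin I → Fin I → ℝ) : Matrix (Fin I × Fin I) (Fin I) ℝ :=
  Matrix.of fun p j => if p.1 = j then f p.1 p.2 else 0

/-- Weighted graph Laplacian `W̃ = ω (diag(deg) - W)`. -/
def lap (I : ℕ) (ω : ℝ) (W : Matrix (Fin I) (Fin I) ℝ) : Matrix (Fin I) (Fin I) ℝ :=
  ω • (Matrix.diagonal (fun i => ∑ j, W i j) - W)

/-- Iteration matrix `Q = I_{I²} - W̃ ⊗ I_I - α F Fᵀ`. -/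
def Qmat (I : ℕ) (a ω α : ℝ) (c : Fin I → ℝ) (W : Matrix (Fin I) (Fin I) ℝ) :
    Matrix (Fin I × Fin I) (Fin I × Fin I) ℝ :=
  1 - (lap I ω W ⊗ₖ (1 : Matrix (Fin I) (Fin I) ℝ))
    - α • (blockF I (fvec I a c) * (blockF I (fvec I a c))ᵀ)

/-- Spectral radius of a real matrix: supremum of absolute values of its (real) spectrum. -/
def specRad {n : Type*} [Fintype n] [DecidableEq n] (M : Matrix n n ℝ) : ℝ :=
  sSup (abs '' spectrum ℝ M)

/-- Product Laplace density with location `β` and scale `σ`. -/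
def lapDensity (n : ℕ) (σ : ℝ) (β : Fin n → ℝ) (z : Fin n → ℝ) : ℝ :=
  ∏ i, (1 / (2 * σ)) * Real.exp (-|z i - β i| / σ)

/-- Law of `β + γ` where `γ` has i.i.d. `Lap(0, 2σ²)` components. -/
def lapMeasure (n : ℕ) (σ : ℝ) (β : Fin n → ℝ) : Measure (Fin n → ℝ) :=
  volume.withDensity (fun z => ENNReal.ofReal (lapDensity n σ β z))

/-- Payoff `Γ_i(b)`. -/
def payoff (I : ℕ) (a : ℝ) (c d : Fin I → ℝ) (i : Fin I) (b : Fin I → ℝ) : ℝ :=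
  -(1/2) * b i ^ 2 + betaCoef I a c d i * b i
    + ∑ j ∈ Finset.univ.erase i, muCoef I a c i j * (b i * b j)

/-- Original utility `U_i(b)`. -/
def Upay (I : ℕ) (a : ℝ) (c d : Fin I → ℝ) (i : Fin I) (b : Fin I → ℝ) : ℝ :=
  -(c i) * (d i + (∑ j, b j) / (I : ℝ) - b i) ^ 2
    - ((∑ j, b j) / ((I : ℝ) * a)) * (b i - (∑ j, b j) / (I : ℝ))



section AuxSpec
variable {m : Type*} [Fintype m] [DecidableEq m]

/-- View a plain function as an element of Euclidean space. -/
def toE (v : m → ℝ) : EuclideanSpace ℝ m := (WithLp.equiv 2 (m → ℝ)).symm v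

omit [DecidableEq m] in
lemma inner_toE' (x : EuclideanSpace ℝ m) (w : m → ℝ) :
    (inner ℝ x (toE w) : ℝ) = ∑ p, x p * w p := by
  simp [toE, PiLp.inner_apply, RCLike.inner_apply, mul_comm]

lemma repr_toE_mulVec (A : Matrix m m ℝ) (hA : A.IsHermitian) (v : m → ℝ) (i : m) :
    hA.eigenvectorBasis.repr (toE (A *ᵥ v)) i
      = hA.eigenvalues i * hA.eigenvectorBasis.repr (toE v) i := by
  rw [OrthonormalBasis.repr_apply_apply, OrthonormalBasis.repr_apply_apply,
    inner_toE', inner_toE']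
  have hAt : Aᵀ = A := by
    rw [← conjTranspose_eq_transpose_of_trivial]; exact hA
  have h1 : ∑ p, (hA.eigenvectorBasis i) p * (A *ᵥ v) p
      = ((A *ᵥ (WithLp.equiv 2 (m → ℝ)) (hA.eigenvectorBasis i)) ⬝ᵥ v) := by
    rw [show (∑ p, (hA.eigenvectorBasis i) p * (A *ᵥ v) p)
        = (((WithLp.equiv 2 (m → ℝ)) (hA.eigenvectorBasis i)) ⬝ᵥ (A *ᵥ v)) from rfl,
      dotProduct_mulVec, ← mulVec_transpose, hAt]
  rw [h1, WithLp.equiv_apply, hA.mulVec_eigenvectorBasis]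
  simp [dotProduct, Matrix.smul_apply, mul_assoc, mul_sum]

lemma sum_sq_eq_repr (A : Matrix m m ℝ) (hA : A.IsHermitian) (v : m → ℝ) :
    ∑ p, v p ^ 2 = ∑ i, (hA.eigenvectorBasis.repr (toE v) i) ^ 2 := by
  have h1 : (inner ℝ (toE v) (toE v) : ℝ) = ∑ p, v p ^ 2 := by
    rw [inner_toE']; exact Finset.sum_congr rfl fun p _ => (sq (v p)).symm
  have h2 : (inner ℝ (hA.eigenvectorBasis.repr (toE v)) (hA.eigenvectorBasis.repr (toE v)) : ℝ)
      = inner ℝ (toE v) (toE v) := hA.eigenvectorBasis.repr.inner_map_map _ _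
  rw [← h1, ← h2, PiLp.inner_apply]
  simp [RCLike.inner_apply, sq]

lemma quadform_eq (A : Matrix m m ℝ) (hA : A.IsHermitian) (v : m → ℝ) :
    ∑ p, v p * (A *ᵥ v) p
      = ∑ i, hA.eigenvalues i * (hA.eigenvectorBasis.repr (toE v) i) ^ 2 := by
  have h2 : (inner ℝ (hA.eigenvectorBasis.repr (toE v)) (hA.eigenvectorBasis.repr (toE (A *ᵥ v))) : ℝ)
      = inner ℝ (toE v) (toE (A *ᵥ v)) := hA.eigenvectorBasis.repr.inner_map_map _ _
  rw [show (∑ p, v p * (A *ᵥ v) p) = (inner ℝ (toE v) (toE (A *ᵥ v)) : ℝ) from (inner_toE' _ _).symm,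
    ← h2, PiLp.inner_apply]
  simp only [RCLike.inner_apply, starRingEnd_apply, star_trivial, repr_toE_mulVec A hA]
  exact Finset.sum_congr rfl fun i _ => by ring

lemma mulVec_sq_eq_repr (A : Matrix m m ℝ) (hA : A.IsHermitian) (v : m → ℝ) :
    ∑ p, (A *ᵥ v) p ^ 2
      = ∑ i, (hA.eigenvalues i)^2 * (hA.eigenvectorBasis.repr (toE v) i) ^ 2 := by
  rw [sum_sq_eq_repr A hA]
  exact Finset.sum_congr rfl fun i _ => by rw [repr_toE_mulVec A hA]; ring

lemma mulVec_eq_zero_of_quadform (A : Matrix m m ℝ) (hA : A.IsHermitian)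
    (hpos : ∀ i, 0 ≤ hA.eigenvalues i) (v : m → ℝ)
    (h0 : ∑ p, v p * (A *ᵥ v) p = 0) : A *ᵥ v = 0 := by
  rw [quadform_eq A hA] at h0
  have hz : ∀ i ∈ Finset.univ, hA.eigenvalues i * (hA.eigenvectorBasis.repr (toE v) i) ^ 2 = 0 := by
    intro i _
    have := (Finset.sum_eq_zero_iff_of_nonneg
      (fun i _ => mul_nonneg (hpos i) (sq_nonneg _))).mp h0
    exact this i (Finset.mem_univ i)
  have hrepr : hA.eigenvectorBasis.repr (toE (A *ᵥ v)) = 0 := by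
    ext i
    rw [repr_toE_mulVec A hA]
    have := hz i (Finset.mem_univ i)
    rcases mul_eq_zero.mp this with h | h
    · simp [h]
    · simp [pow_eq_zero_iff] at h; simp [h]
  have : toE (A *ᵥ v) = 0 := by
    apply hA.eigenvectorBasis.repr.injective
    simp [hrepr]
  have h2 : ∀ p, (A *ᵥ v) p = 0 := fun p => congrFun (congrArg (WithLp.equiv 2 (m → ℝ)) this) p
  funext p; exact h2 p
end AuxSpec

lemma tzero (I : ℕ) (hI : 2 ≤ I) (a : ℝ) (ha : 0 < a) (c : Fin I → ℝ) (hc : ∀ i, 0 < c i)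
    (t : Fin I → ℝ) (ht : ∀ i, fvec I a c i ⬝ᵥ t = 0) : t = 0 := by
  have hI2 : (2:ℝ) ≤ (I:ℝ) := by exact_mod_cast hI
  have hIpos : (0:ℝ) < (I:ℝ) := by linarith
  set s := ∑ j, t j with hs
  have hx : ∀ i, 0 < a * c i * ((I:ℝ) - 1) := fun i =>
    mul_pos (mul_pos ha (hc i)) (by linarith)
  have key : ∀ i, t i * ((I:ℝ) * (2 * (a * c i * ((I:ℝ)-1)) + 1))
      = s * (2 * (a * c i * ((I:ℝ)-1)) - ((I:ℝ) - 2)) := by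
    intro i
    have h1 := ht i
    set x := a * c i * ((I:ℝ)-1) with hxdef
    have hxpos := hx i
    have hD : 2 * ((I:ℝ) - 1) * (x + 1) ≠ 0 := by nlinarith
    have hm : ∀ j, muCoef I a c i j = if j = i then 0 else
        (2 * x - ((I:ℝ)-2)) / (2 * ((I:ℝ) - 1) * (x + 1)) := by
      intro j; rw [muCoef]; split <;> simp [hxdef] <;> ring_nf
    set m := (2 * x - ((I:ℝ)-2)) / (2 * ((I:ℝ) - 1) * (x + 1)) with hmdef
    have h2 : fvec I a c i ⬝ᵥ t = t i - (m * s - m * t i) := by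
      simp only [fvec, dotProduct, sub_mul]
      rw [Finset.sum_sub_distrib]
      congr 1
      · simp
      · have : ∀ j, muCoef I a c i j * t j = m * t j - (if j = i then m * t j else 0) := by
          intro j; rw [hm j]; split <;> simp
        rw [Finset.sum_congr rfl fun j _ => this j, Finset.sum_sub_distrib]
        simp [← Finset.mul_sum, ← hs]
    rw [h2] at h1
    have h3 : t i * (2 * ((I:ℝ) - 1) * (x + 1)) + (2 * x - ((I:ℝ)-2)) * t i
        - (2 * x - ((I:ℝ)-2)) * s = 0 := by
      have h4 : (t i - (m * s - m * t i)) * (2 * ((I:ℝ) - 1) * (x + 1)) = 0 := by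
        rw [h1]; ring
      have hmD : m * (2 * ((I:ℝ) - 1) * (x + 1)) = 2 * x - ((I:ℝ)-2) := by
        rw [hmdef, div_mul_cancel₀ _ hD]
      linear_combination h4 + (s - t i) * hmD
    nlinarith [h3]
  have hform : ∀ i, t i = s * (1/(I:ℝ) - ((I:ℝ)-1) / ((I:ℝ) * (2 * (a * c i * ((I:ℝ)-1)) + 1))) := by
    intro i
    have hxpos := hx i
    have hden : (I:ℝ) * (2 * (a * c i * ((I:ℝ)-1)) + 1) ≠ 0 := by nlinarith
    have := key i
    field_simp at this ⊢
    have hE : 2 * a * c i * ((I:ℝ) - 1) + 1 ≠ 0 := by nlinarith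
    rw [one_sub_div hE, mul_div_assoc', eq_div_iff hE]
    linear_combination this
  have hne : Nonempty (Fin I) := ⟨⟨0, by omega⟩⟩
  have hpos : 0 < ∑ i, ((I:ℝ)-1) / ((I:ℝ) * (2 * (a * c i * ((I:ℝ)-1)) + 1)) := by
    apply Finset.sum_pos
    · intro i _
      have hxpos := hx i
      apply div_pos
      · nlinarith
      · nlinarith
    · exact Finset.univ_nonempty
  have hsum : s = s * (1 - ∑ i, ((I:ℝ)-1) / ((I:ℝ) * (2 * (a * c i * ((I:ℝ)-1)) + 1))) := by
    conv_lhs => rw [hs, Finset.sum_congr rfl fun i _ => hform i]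
    rw [← Finset.mul_sum, Finset.sum_sub_distrib]
    congr 2
    rw [Finset.sum_const, Finset.card_univ, Fintype.card_fin, nsmul_eq_mul]
    field_simp
  have hs0 : s = 0 := by
    have h5 : s * (∑ i, ((I:ℝ)-1) / ((I:ℝ) * (2 * (a * c i * ((I:ℝ)-1)) + 1))) = 0 := by
      nlinarith [hsum]
    rcases mul_eq_zero.mp h5 with h | h
    · exact h
    · exact absurd h (ne_of_gt hpos)
  funext i
  rw [Pi.zero_apply, hform i, hs0, zero_mul]

section AuxStruct
variable {I : ℕ}

lemma kron_mulVec (L : Matrix (Fin I) (Fin I) ℝ) (v : Fin I × Fin I → ℝ) (p : Fin I × Fin I) :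
    ((L ⊗ₖ (1 : Matrix (Fin I) (Fin I) ℝ)) *ᵥ v) p = ∑ j, L p.1 j * v (j, p.2) := by
  rw [mulVec, dotProduct, Fintype.sum_prod_type]
  refine Finset.sum_congr rfl fun j _ => ?_
  simp [kroneckerMap_apply, one_apply, mul_ite, ite_mul, mul_assoc]

lemma blockF_mulVec (f : Fin I → Fin I → ℝ) (w : Fin I → ℝ) (p : Fin I × Fin I) :
    ((blockF I f) *ᵥ w) p = f p.1 p.2 * w p.1 := by
  rw [mulVec, dotProduct]
  simp [blockF, ite_mul]

lemma blockFT_mulVec (f : Fin I → Fin I → ℝ) (v : Fin I × Fin I → ℝ) (j : Fin I) :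
    ((blockF I f)ᵀ *ᵥ v) j = ∑ m, f j m * v (j, m) := by
  rw [mulVec, dotProduct, Fintype.sum_prod_type]
  rw [Finset.sum_eq_single j]
  · refine Finset.sum_congr rfl fun m _ => ?_
    simp [blockF]
  · intro b _ hb
    apply Finset.sum_eq_zero
    intro m _
    simp [blockF, transpose_apply, Ne.symm hb, hb]
  · simp

lemma G_mulVec (f : Fin I → Fin I → ℝ) (v : Fin I × Fin I → ℝ) (p : Fin I × Fin I) :
    ((blockF I f * (blockF I f)ᵀ) *ᵥ v) p = f p.1 p.2 * ∑ m, f p.1 m * v (p.1, m) := by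
  rw [← mulVec_mulVec, blockF_mulVec, blockFT_mulVec]

lemma qK_eq (L : Matrix (Fin I) (Fin I) ℝ) (v : Fin I × Fin I → ℝ) :
    ∑ p, v p * ((L ⊗ₖ (1 : Matrix (Fin I) (Fin I) ℝ)) *ᵥ v) p
      = ∑ m, ∑ i, v (i, m) * (L *ᵥ fun j => v (j, m)) i := by
  rw [Fintype.sum_prod_type, Finset.sum_comm]
  refine Finset.sum_congr rfl fun m _ => Finset.sum_congr rfl fun i _ => ?_
  rw [kron_mulVec]
  rfl

lemma qG_eq (f : Fin I → Fin I → ℝ) (v : Fin I × Fin I → ℝ) :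
    ∑ p, v p * ((blockF I f * (blockF I f)ᵀ) *ᵥ v) p
      = ∑ i, (∑ m, f i m * v (i, m)) ^ 2 := by
  rw [Fintype.sum_prod_type]
  refine Finset.sum_congr rfl fun i _ => ?_
  rw [show ∀ g : Fin I → ℝ, (∑ m, g m) ^ 2 = (∑ m, g m) * (∑ m, g m) from fun g => sq _]
  have h : ∀ m2, v (i, m2) * ((blockF I f * (blockF I f)ᵀ) *ᵥ v) (i, m2)
      = (f i m2 * v (i, m2)) * (∑ m, f i m * v (i, m)) := fun m2 => by
    rw [G_mulVec]; ring
  rw [Finset.sum_congr rfl fun m _ => h m, ← Finset.sum_mul]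
end AuxStruct


/-- under Assumption A1, the noiseless iteration `y(k+1) = Q y(k) + α F β`
converges from any initial state to the stacked Nash equilibrium `1_I ⊗ b*`. -/
theorem stmt_12
    (I : ℕ) (hI : 2 ≤ I) (a : ℝ) (ha : 0 < a)
    (c : Fin I → ℝ) (hc : ∀ i, 0 < c i)
    (W : Matrix (Fin I) (Fin I) ℝ) (hWsym : W.IsSymm) (hWdiag : ∀ i, W i i = 0)
    (hW01 : ∀ i j, W i j = 0 ∨ W i j = 1)
    (ω : ℝ) (hω0 : 0 ≤ ω) (hω1 : ∀ i, ω ≤ 1 / (1 + ∑ j, W i j))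
    (hconn : ∀ v : Fin I → ℝ, (lap I ω W) *ᵥ v = 0 → ∃ t : ℝ, v = fun _ => t)
    (lamBar lamLow : ℝ) (hlamLow0 : 0 < lamLow)
    (hlamBarUB : ∀ lam ∈ spectrum ℝ (lap I ω W), lam ≤ lamBar)
    (hlamBarMem : lamBar ∈ spectrum ℝ (lap I ω W))
    (hlamLowLB : ∀ lam ∈ spectrum ℝ (lap I ω W), lam ≠ 0 → lamLow ≤ lam)
    (hlamLowMem : lamLow ∈ spectrum ℝ (lap I ω W))
    (fBar fLow : ℝ)
    (hfBarUB : ∀ i, Real.sqrt (∑ j, fvec I a c i j ^ 2) ≤ fBar)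
    (hfBarMem : ∃ i, Real.sqrt (∑ j, fvec I a c i j ^ 2) = fBar)
    (hfLowLB : ∀ i, fLow ≤ Real.sqrt (∑ j, fvec I a c i j ^ 2))
    (hfLowMem : ∃ i, Real.sqrt (∑ j, fvec I a c i j ^ 2) = fLow)
    (α : ℝ) (hα0 : 0 < α) (hα1 : α < (2 - lamBar) / (3 * fBar ^ 2))
    (hα2 : fBar ≠ fLow → α < lamLow * fLow ^ 2 / (2 * (fBar ^ 4 - fLow ^ 4)))
    (d : Fin I → ℝ)
    (bstar : Fin I → ℝ) (hb : ∀ i, fvec I a c i ⬝ᵥ bstar = betaCoef I a c d i)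
    (y : ℕ → Fin I × Fin I → ℝ)
    (hy : ∀ k, y (k + 1)
      = (Qmat I a ω α c W) *ᵥ y k + α • (blockF I (fvec I a c)) *ᵥ (betaCoef I a c d)) :
    Tendsto y atTop (𝓝 (fun p : Fin I × Fin I => bstar p.2)) := by
  haveI hne : Nonempty (Fin I) := ⟨⟨0, by omega⟩⟩
  -- symmetry facts
  have hLsym : (lap I ω W)ᵀ = lap I ω W := by
    rw [lap, transpose_smul, transpose_sub, diagonal_transpose, hWsym.eq]
  have hL : (lap I ω W).IsHermitian := by
    rw [IsHermitian, conjTranspose_eq_transpose_of_trivial]; exact hLsym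
  have hKsym : (lap I ω W ⊗ₖ (1 : Matrix (Fin I) (Fin I) ℝ))ᵀ
      = lap I ω W ⊗ₖ (1 : Matrix (Fin I) (Fin I) ℝ) := by
    ext p q
    simp only [transpose_apply, kroneckerMap_apply, one_apply]
    rw [show lap I ω W q.1 p.1 = (lap I ω W)ᵀ p.1 q.1 from rfl, hLsym]
    congr 1
    simp [eq_comm]
  have hQ : (Qmat I a ω α c W).IsHermitian := by
    rw [IsHermitian, conjTranspose_eq_transpose_of_trivial, Qmat]
    rw [transpose_sub, transpose_sub, transpose_one, transpose_smul, transpose_mul,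
      transpose_transpose, hKsym]
  -- eigenvalue facts for the Laplacian
  have hLnn : ∀ i, 0 ≤ hL.eigenvalues i := by
    intro i
    rcases eq_or_ne (hL.eigenvalues i) 0 with h | h
    · exact le_of_eq h.symm
    · exact le_trans hlamLow0.le (hlamLowLB _ (hL.eigenvalues_mem_spectrum_real i) h)
  have hLle : ∀ i, hL.eigenvalues i ≤ lamBar :=
    fun i => hlamBarUB _ (hL.eigenvalues_mem_spectrum_real i)
  -- quadratic form facts for the Laplacian
  have qL_nonneg : ∀ w : Fin I → ℝ, 0 ≤ ∑ i, w i * ((lap I ω W) *ᵥ w) i := by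
    intro w; rw [quadform_eq _ hL]
    exact Finset.sum_nonneg fun i _ => mul_nonneg (hLnn i) (sq_nonneg _)
  have qL_le : ∀ w : Fin I → ℝ, ∑ i, w i * ((lap I ω W) *ᵥ w) i ≤ lamBar * ∑ i, w i ^ 2 := by
    intro w; rw [quadform_eq _ hL, sum_sq_eq_repr _ hL, Finset.mul_sum]
    exact Finset.sum_le_sum fun i _ => mul_le_mul_of_nonneg_right (hLle i) (sq_nonneg _)
  have hsum_prod : ∀ v : Fin I × Fin I → ℝ, ∑ p, v p ^ 2 = ∑ m, ∑ i, v (i, m) ^ 2 := by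
    intro v; rw [Fintype.sum_prod_type, Finset.sum_comm]
  -- quadratic form facts for the Kronecker part
  have qK_nonneg : ∀ v : Fin I × Fin I → ℝ,
      0 ≤ ∑ p, v p * ((lap I ω W ⊗ₖ (1 : Matrix (Fin I) (Fin I) ℝ)) *ᵥ v) p := by
    intro v; rw [qK_eq]; exact Finset.sum_nonneg fun m _ => qL_nonneg _
  have qK_le : ∀ v : Fin I × Fin I → ℝ,
      ∑ p, v p * ((lap I ω W ⊗ₖ (1 : Matrix (Fin I) (Fin I) ℝ)) *ᵥ v) p
        ≤ lamBar * ∑ p, v p ^ 2 := by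
    intro v; rw [qK_eq, hsum_prod, Finset.mul_sum]
    exact Finset.sum_le_sum fun m _ => qL_le _
  -- quadratic form facts for the F Fᵀ part
  have hsumf_le : ∀ i, ∑ j, fvec I a c i j ^ 2 ≤ fBar ^ 2 := by
    intro i
    have h1 : Real.sqrt (∑ j, fvec I a c i j ^ 2) ≤ fBar := hfBarUB i
    have h2 : 0 ≤ ∑ j, fvec I a c i j ^ 2 := Finset.sum_nonneg fun j _ => sq_nonneg _
    nlinarith [Real.sq_sqrt h2, Real.sqrt_nonneg (∑ j, fvec I a c i j ^ 2)]
  have qG_nonneg : ∀ v : Fin I × Fin I → ℝ,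
      0 ≤ ∑ p, v p * ((blockF I (fvec I a c) * (blockF I (fvec I a c))ᵀ) *ᵥ v) p := by
    intro v; rw [qG_eq]; exact Finset.sum_nonneg fun i _ => sq_nonneg _
  have qG_le : ∀ v : Fin I × Fin I → ℝ,
      ∑ p, v p * ((blockF I (fvec I a c) * (blockF I (fvec I a c))ᵀ) *ᵥ v) p
        ≤ fBar ^ 2 * ∑ p, v p ^ 2 := by
    intro v
    rw [qG_eq, show (∑ p : Fin I × Fin I, v p ^ 2) = ∑ i, ∑ m, v (i, m) ^ 2 from
      Fintype.sum_prod_type _, Finset.mul_sum]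
    refine Finset.sum_le_sum fun i _ => ?_
    calc (∑ m, fvec I a c i m * v (i, m)) ^ 2
        ≤ (∑ m, fvec I a c i m ^ 2) * ∑ m, v (i, m) ^ 2 :=
          Finset.sum_mul_sq_le_sq_mul_sq _ _ _
      _ ≤ fBar ^ 2 * ∑ m, v (i, m) ^ 2 :=
          mul_le_mul_of_nonneg_right (hsumf_le i) (Finset.sum_nonneg fun m _ => sq_nonneg _)
  -- kernel triviality
  have hker : ∀ v : Fin I × Fin I → ℝ,
      (∑ p, v p * ((lap I ω W ⊗ₖ (1 : Matrix (Fin I) (Fin I) ℝ)) *ᵥ v) p) = 0 →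
      (∑ p, v p * ((blockF I (fvec I a c) * (blockF I (fvec I a c))ᵀ) *ᵥ v) p) = 0 →
      v = 0 := by
    intro v h1 h2
    rw [qK_eq] at h1
    have h1' : ∀ mm : Fin I, ∑ i, v (i, mm) * ((lap I ω W) *ᵥ fun j => v (j, mm)) i = 0 := by
      intro mm
      exact (Finset.sum_eq_zero_iff_of_nonneg (fun m _ => qL_nonneg _)).mp h1 mm
        (Finset.mem_univ mm)
    have h1'' : ∀ mm : Fin I, ∃ t : ℝ, (fun j => v (j, mm)) = fun _ => t := fun mm =>
      hconn _ (mulVec_eq_zero_of_quadform _ hL hLnn _ (h1' mm))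
    choose tt htt using h1''
    have hvt : ∀ j mm, v (j, mm) = tt mm := fun j mm => congrFun (htt mm) j
    rw [qG_eq] at h2
    have h2' : ∀ i, ∑ mm, fvec I a c i mm * v (i, mm) = 0 := by
      intro i
      have := (Finset.sum_eq_zero_iff_of_nonneg (fun i _ => sq_nonneg _)).mp h2 i
        (Finset.mem_univ i)
      exact (pow_eq_zero_iff (n := 2) (by norm_num)).mp this
    have ht0 : tt = 0 := by
      apply tzero I hI a ha c hc
      intro i
      rw [show fvec I a c i ⬝ᵥ tt = ∑ mm, fvec I a c i mm * tt mm from rfl, ← h2' i]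
      exact Finset.sum_congr rfl fun mm _ => by rw [hvt i mm]
    funext p
    obtain ⟨j, mm⟩ := p
    rw [hvt j mm, ht0]; rfl
  -- fBar ≥ 1 and the key bound
  have hfBar1 : (1:ℝ) ≤ fBar := by
    obtain ⟨i⟩ := hne
    have hfii : fvec I a c i i = 1 := by simp [fvec, muCoef]
    have h1 : (1:ℝ) ≤ ∑ j, fvec I a c i j ^ 2 := by
      have h0 := Finset.single_le_sum (f := fun j => fvec I a c i j ^ 2)
        (fun j _ => sq_nonneg _) (Finset.mem_univ i)
      simpa [hfii] using h0
    have h2 : 0 ≤ ∑ j, fvec I a c i j ^ 2 := le_trans zero_le_one h1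
    nlinarith [Real.sq_sqrt h2, Real.sqrt_nonneg (∑ j, fvec I a c i j ^ 2), hfBarUB i]
  have hbound : lamBar + α * fBar ^ 2 < 2 := by
    have h3 : 0 < 3 * fBar ^ 2 := by nlinarith
    have h4 := (lt_div_iff₀ h3).mp hα1
    nlinarith [hα0]
  -- quadratic form splitting for Q
  have hsplit : ∀ w : Fin I × Fin I → ℝ,
      ∑ p, w p * ((Qmat I a ω α c W) *ᵥ w) p
        = ∑ p, w p ^ 2
          - (∑ p, w p * ((lap I ω W ⊗ₖ (1 : Matrix (Fin I) (Fin I) ℝ)) *ᵥ w) p)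
          - α * ∑ p, w p * ((blockF I (fvec I a c) * (blockF I (fvec I a c))ᵀ) *ᵥ w) p := by
    intro w
    have hmv : (Qmat I a ω α c W) *ᵥ w
        = w - (lap I ω W ⊗ₖ (1 : Matrix (Fin I) (Fin I) ℝ)) *ᵥ w
          - α • ((blockF I (fvec I a c) * (blockF I (fvec I a c))ᵀ) *ᵥ w) := by
      rw [Qmat, sub_mulVec, sub_mulVec, one_mulVec, smul_mulVec]
    have hterm : ∀ p, w p * ((w - (lap I ω W ⊗ₖ (1 : Matrix (Fin I) (Fin I) ℝ)) *ᵥ w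
          - α • ((blockF I (fvec I a c) * (blockF I (fvec I a c))ᵀ) *ᵥ w)) p)
        = w p ^ 2 - w p * (((lap I ω W ⊗ₖ (1 : Matrix (Fin I) (Fin I) ℝ)) *ᵥ w) p)
          - α * (w p * (((blockF I (fvec I a c) * (blockF I (fvec I a c))ᵀ) *ᵥ w) p)) := by
      intro p
      simp only [Pi.sub_apply, Pi.smul_apply, smul_eq_mul]; ring
    rw [hmv, Finset.sum_congr rfl fun p _ => hterm p, Finset.sum_sub_distrib,
      Finset.sum_sub_distrib, ← Finset.mul_sum]
  -- eigenvalues of Q are in (-1, 1)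
  have hmu : ∀ i : Fin I × Fin I, |hQ.eigenvalues i| < 1 := by
    intro i
    set v : Fin I × Fin I → ℝ :=
      (WithLp.equiv 2 (Fin I × Fin I → ℝ)) (hQ.eigenvectorBasis i) with hv
    have hQv : Qmat I a ω α c W *ᵥ v = hQ.eigenvalues i • v := hQ.mulVec_eigenvectorBasis i
    have hv1 : ∑ p, v p ^ 2 = 1 := by
      have hn := hQ.eigenvectorBasis.orthonormal.1 i
      rw [EuclideanSpace.norm_eq] at hn
      have h3 := Real.sqrt_eq_one.mp hn
      rw [← h3]
      exact Finset.sum_congr rfl fun p _ => by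
        rw [Real.norm_eq_abs, sq_abs]; rfl
    have hqf1 : ∑ p, v p * ((Qmat I a ω α c W) *ᵥ v) p = hQ.eigenvalues i := by
      rw [hQv]
      have h5 : ∀ p, v p * (hQ.eigenvalues i • v) p = hQ.eigenvalues i * v p ^ 2 := by
        intro p; simp only [Pi.smul_apply, smul_eq_mul]; ring
      rw [Finset.sum_congr rfl fun p _ => h5 p, ← Finset.mul_sum, hv1, mul_one]
    have hμeq : hQ.eigenvalues i
        = 1 - ((∑ p, v p * ((lap I ω W ⊗ₖ (1 : Matrix (Fin I) (Fin I) ℝ)) *ᵥ v) p)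
          + α * ∑ p, v p * ((blockF I (fvec I a c) * (blockF I (fvec I a c))ᵀ) *ᵥ v) p) := by
      rw [← hqf1, hsplit v, hv1]; ring
    have hub : (∑ p, v p * ((lap I ω W ⊗ₖ (1 : Matrix (Fin I) (Fin I) ℝ)) *ᵥ v) p)
        + α * ∑ p, v p * ((blockF I (fvec I a c) * (blockF I (fvec I a c))ᵀ) *ᵥ v) p < 2 := by
      have h6 := qK_le v
      have h7 := mul_le_mul_of_nonneg_left (qG_le v) hα0.le
      rw [hv1] at h6 h7
      nlinarith [hbound]
    have hlb : 0 < (∑ p, v p * ((lap I ω W ⊗ₖ (1 : Matrix (Fin I) (Fin I) ℝ)) *ᵥ v) p)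
        + α * ∑ p, v p * ((blockF I (fvec I a c) * (blockF I (fvec I a c))ᵀ) *ᵥ v) p := by
      rcases lt_or_eq_of_le (add_nonneg (qK_nonneg v) (mul_nonneg hα0.le (qG_nonneg v)))
        with h | h
      · exact h
      · exfalso
        have hk := qK_nonneg v
        have hg := qG_nonneg v
        have hK0 : ∑ p, v p * ((lap I ω W ⊗ₖ (1 : Matrix (Fin I) (Fin I) ℝ)) *ᵥ v) p = 0 := by
          nlinarith [h.symm, mul_nonneg hα0.le (qG_nonneg v)]
        have hG0 : ∑ p, v p * ((blockF I (fvec I a c) * (blockF I (fvec I a c))ᵀ) *ᵥ v) p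
            = 0 := by
          have : α * ∑ p, v p * ((blockF I (fvec I a c) * (blockF I (fvec I a c))ᵀ) *ᵥ v) p
              = 0 := by linarith [h.symm]
          rcases mul_eq_zero.mp this with h' | h'
          · exact absurd h' (ne_of_gt hα0)
          · exact h'
        have hv0 : v = 0 := hker v hK0 hG0
        rw [hv0] at hv1
        simp at hv1
    rw [hμeq]
    rw [abs_lt]
    constructor <;> linarith
  -- the contraction factor
  have hPne : Nonempty (Fin I × Fin I) := inferInstance
  set r : ℝ := Finset.univ.sup' Finset.univ_nonempty
    (fun i : Fin I × Fin I => |hQ.eigenvalues i|) with hrdef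
  have hr1 : r < 1 := (Finset.sup'_lt_iff _).mpr fun i _ => hmu i
  have hrB : ∀ i, |hQ.eigenvalues i| ≤ r := fun i =>
    Finset.le_sup' (fun j : Fin I × Fin I => |hQ.eigenvalues j|) (Finset.mem_univ i)
  have hr0 : 0 ≤ r := le_trans (abs_nonneg _) (hrB (Classical.arbitrary _))
  have hr2 : r ^ 2 < 1 := by nlinarith
  have hcon : ∀ w : Fin I × Fin I → ℝ,
      ∑ p, ((Qmat I a ω α c W) *ᵥ w) p ^ 2 ≤ r ^ 2 * ∑ p, w p ^ 2 := by
    intro w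
    rw [mulVec_sq_eq_repr _ hQ, sum_sq_eq_repr _ hQ w, Finset.mul_sum]
    refine Finset.sum_le_sum fun i _ => ?_
    have h8 : hQ.eigenvalues i ^ 2 ≤ r ^ 2 := by
      rw [← sq_abs]; exact pow_le_pow_left₀ (abs_nonneg _) (hrB i) 2
    exact mul_le_mul_of_nonneg_right h8 (sq_nonneg _)
  -- fixed point
  have hrow : ∀ i, ∑ j, lap I ω W i j = 0 := by
    intro i
    have h9 : ∀ j, lap I ω W i j = ω * ((if i = j then ∑ k, W i k else 0) - W i j) := by
      intro j
      simp [lap, Matrix.smul_apply, Matrix.sub_apply, Matrix.diagonal_apply, smul_eq_mul]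
    rw [Finset.sum_congr rfl fun j _ => h9 j, ← Finset.mul_sum, Finset.sum_sub_distrib]
    simp
  have hKy : ∀ p : Fin I × Fin I,
      ((lap I ω W ⊗ₖ (1 : Matrix (Fin I) (Fin I) ℝ))
        *ᵥ (fun q : Fin I × Fin I => bstar q.2)) p = 0 := by
    intro p
    rw [kron_mulVec]
    rw [show (∑ j, lap I ω W p.1 j * bstar p.2) = (∑ j, lap I ω W p.1 j) * bstar p.2 from
      (Finset.sum_mul _ _ _).symm, hrow, zero_mul]
  have hGy : ∀ p : Fin I × Fin I,
      ((blockF I (fvec I a c) * (blockF I (fvec I a c))ᵀ)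
        *ᵥ (fun q : Fin I × Fin I => bstar q.2)) p
      = fvec I a c p.1 p.2 * betaCoef I a c d p.1 := by
    intro p
    rw [G_mulVec]
    congr 1
    exact hb p.1
  have hz : ∀ p : Fin I × Fin I,
      (α • (blockF I (fvec I a c)) *ᵥ (betaCoef I a c d)) p
        = α * (fvec I a c p.1 p.2 * betaCoef I a c d p.1) := by
    intro p
    simp only [Matrix.smul_mulVec, Pi.smul_apply, smul_eq_mul, blockF_mulVec]
  have hfixp : ∀ p : Fin I × Fin I,
      ((Qmat I a ω α c W) *ᵥ (fun q : Fin I × Fin I => bstar q.2)) p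
        + α * (fvec I a c p.1 p.2 * betaCoef I a c d p.1) = bstar p.2 := by
    intro p
    have hmv : (Qmat I a ω α c W) *ᵥ (fun q : Fin I × Fin I => bstar q.2)
        = (fun q : Fin I × Fin I => bstar q.2)
          - (lap I ω W ⊗ₖ (1 : Matrix (Fin I) (Fin I) ℝ))
              *ᵥ (fun q : Fin I × Fin I => bstar q.2)
          - α • ((blockF I (fvec I a c) * (blockF I (fvec I a c))ᵀ)
              *ᵥ (fun q : Fin I × Fin I => bstar q.2)) := by
      rw [Qmat, sub_mulVec, sub_mulVec, one_mulVec, smul_mulVec]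
    rw [hmv]
    simp only [Pi.sub_apply, Pi.smul_apply, smul_eq_mul]
    rw [hKy p, hGy p]
    ring
  -- error recursion
  have herr : ∀ k (p : Fin I × Fin I), y (k+1) p - bstar p.2
      = ((Qmat I a ω α c W) *ᵥ (fun q : Fin I × Fin I => y k q - bstar q.2)) p := by
    intro k p
    have h1 := congrFun (hy k) p
    simp only [Pi.add_apply] at h1
    rw [hz p] at h1
    have h2 : (fun q : Fin I × Fin I => y k q - bstar q.2)
        = y k - (fun q : Fin I × Fin I => bstar q.2) := rfl
    rw [h2, mulVec_sub]
    simp only [Pi.sub_apply]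
    have h3 := hfixp p
    linarith [h1, h3]
  -- geometric decay
  set Nk : ℕ → ℝ := fun k => ∑ p, (y k p - bstar p.2) ^ 2 with hNkdef
  have hstep : ∀ k, Nk (k+1) ≤ r ^ 2 * Nk k := by
    intro k
    have h4 : Nk (k+1)
        = ∑ p, ((Qmat I a ω α c W) *ᵥ (fun q : Fin I × Fin I => y k q - bstar q.2)) p ^ 2 :=
      Finset.sum_congr rfl fun p _ => by rw [herr k p]
    rw [h4]
    exact hcon _
  have hgeo : ∀ k, Nk k ≤ (r ^ 2) ^ k * Nk 0 := by
    intro k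
    induction k with
    | zero => simp
    | succ n ih =>
      calc Nk (n+1) ≤ r ^ 2 * Nk n := hstep n
        _ ≤ r ^ 2 * ((r ^ 2) ^ n * Nk 0) := mul_le_mul_of_nonneg_left ih (sq_nonneg r)
        _ = (r ^ 2) ^ (n+1) * Nk 0 := by ring
  have hNk0 : Tendsto Nk atTop (𝓝 0) := by
    apply squeeze_zero (fun k => Finset.sum_nonneg fun p _ => sq_nonneg _) hgeo
    have h1 : Tendsto (fun k : ℕ => (r ^ 2) ^ k) atTop (𝓝 0) :=
      tendsto_pow_atTop_nhds_zero_of_lt_one (sq_nonneg r) hr2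
    simpa using h1.mul_const (Nk 0)
  -- conclusion
  rw [tendsto_pi_nhds]
  intro p
  have habs : ∀ k, ‖y k p - bstar p.2‖ ≤ Real.sqrt (Nk k) := by
    intro k
    rw [Real.norm_eq_abs, ← Real.sqrt_sq_eq_abs]
    have h10 : (y k p - bstar p.2) ^ 2 ≤ Nk k :=
      Finset.single_le_sum (f := fun q : Fin I × Fin I => (y k q - bstar q.2) ^ 2)
        (fun q _ => sq_nonneg _) (Finset.mem_univ p)
    exact Real.sqrt_le_sqrt h10
  have hsq : Tendsto (fun k => Real.sqrt (Nk k)) atTop (𝓝 0) := by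
    have := hNk0.sqrt
    simpa using this
  have hzero : Tendsto (fun k => y k p - bstar p.2) atTop (𝓝 0) :=
    squeeze_zero_norm habs hsq
  have hfin := hzero.add_const (bstar p.2)
  simpa using hfin
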